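/- Let μ be a σ-finite Borel measure on ℝ, 𝕞 := λ ⊗ μ on (0,1] × ℝ (λ the Lebesgue measure), and let ℍ be a group of dyadic permutations of (0,1] (a subgroup of Perm^dyad). Let n, m ≥ 1, 0 ≤ k ≤ min(n,m), 0 ≤ r ≤ min(n,m) − k, let f ∈ L₂(𝕞^{⊗n}) and f′ ∈ L₂(𝕞^{⊗m}) satisfy ∫_{((0,1]×ℝ)^k} |f(α,γ,ρ) f′(ρ,γ,β)| d𝕞^{⊗k}(ρ) < ∞ for all (α,β,γ) ∈ ((0,1]×ℝ)^{n−k−r} × ((0,1]×ℝ)^{m−k−r} × ((0,1]×ℝ)^r, and define the contraction (f ⊗_k^r f′)(α,β,γ) := Π_x(γ) ∫_{((0,1]×ℝ)^k} f(α,γ,ρ) f′(ρ,γ,β) d𝕞^{⊗k}(ρ), where Π_x(γ) is the product of the x-coordinates of γ. If f is constant on the orbits of ℍ[n] and f′ is constant on the orbits of ℍ[m], then f ⊗_k^r f′ is constant on the orbits of ℍ[n+m−2k−r]. -/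

import Mathlib

/-! A dyadic permutation of level `d` translates each dyadic interval `((k-1)/2^d, k/2^d]` onto
another one and permutes these intervals, so it preserves Lebesgue measure on `(0,1]`. Hence
`g[k]` preserves `𝕞^{⊗k}`, and the substitution `ρ ↦ g[k] ρ` in the integral defining
`f ⊗_k^r f'`, combined with the invariance of `f` and `f'`, gives the claim; the factor `Π_x(γ)`
does not see the time coordinates. -/

open MeasureTheory
open scoped ENNReal

/-- The `k`-th dyadic interval of level `d` (1-indexed): `I_k^d = ((k-1)/2^d, k/2^d]`. -/
def dyadI (d k : ℕ) : Set ℝ := Set.Ioc (((k : ℝ) - 1) / 2 ^ d) ((k : ℝ) / 2 ^ d)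

/-- `g` is a dyadic permutation of `(0,1]` (extended to `ℝ` by the identity outside `(0,1]`). -/
def IsDyadicPerm (g : ℝ → ℝ) : Prop :=
  (∀ t ∉ Set.Ioc (0 : ℝ) 1, g t = t) ∧
  ∃ d : ℕ, ∃ π : Equiv.Perm (Fin (2 ^ d)),
    ∀ k : Fin (2 ^ d), ∀ t ∈ dyadI d ((k : ℕ) + 1),
      g t = (((π k : ℕ) : ℝ) + 1) / 2 ^ d - (((k : ℕ) + 1 : ℝ) / 2 ^ d - t)

/-- The action `g[j]` of a map `g : (0,1] → (0,1]` on `((0,1] × ℝ)^j`, acting on the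
time coordinates only. -/
def diagAct (g : ℝ → ℝ) {j : ℕ} (v : Fin j → ℝ × ℝ) : Fin j → ℝ × ℝ :=
  fun i => (g (v i).1, (v i).2)

/-- The measure `𝕞 = λ|_{(0,1]} ⊗ μ` on `(0,1] × ℝ`. -/
noncomputable def mLevy (μ : Measure ℝ) : Measure (ℝ × ℝ) :=
  (volume.restrict (Set.Ioc (0 : ℝ) 1)).prod μ

/-- The contraction `f ⊗_k^r f'` of kernels, as a function of
`(α, β, γ) ∈ ((0,1]×ℝ)^{n-k-r} × ((0,1]×ℝ)^{m-k-r} × ((0,1]×ℝ)^r` (here `a = n-k-r`,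
`b = m-k-r`): `Π_x(γ) ∫ f(α,γ,ρ) f'(ρ,γ,β) d𝕞^{⊗k}(ρ)`. -/
noncomputable def contraction (μ : Measure ℝ) {a b k r : ℕ}
    (f : (Fin a → ℝ × ℝ) → (Fin r → ℝ × ℝ) → (Fin k → ℝ × ℝ) → ℝ)
    (f' : (Fin k → ℝ × ℝ) → (Fin r → ℝ × ℝ) → (Fin b → ℝ × ℝ) → ℝ)
    (α : Fin a → ℝ × ℝ) (β : Fin b → ℝ × ℝ) (γ : Fin r → ℝ × ℝ) : ℝ :=
  (∏ i, (γ i).2) * ∫ ρ, f α γ ρ * f' ρ γ β ∂(Measure.pi fun _ : Fin k => mLevy μ)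


open Set Function

lemma measurableSet_dyadI (d k : ℕ) : MeasurableSet (dyadI d k) :=
  measurableSet_Ioc

lemma dyadI_succ (d i : ℕ) :
    dyadI d (i + 1) = Ioc ((i : ℝ) / 2 ^ d) (((i + 1 : ℕ) : ℝ) / 2 ^ d) := by
  simp [dyadI]

lemma monotone_div_two_pow (d : ℕ) : Monotone fun i : ℕ => (i : ℝ) / 2 ^ d :=
  fun _ _ h => by dsimp only; gcongr

lemma iUnion_dyadI (d : ℕ) : ⋃ k : Fin (2 ^ d), dyadI d (k + 1) = Ioc 0 1 := by
  have h := (monotone_div_two_pow d).biUnion_Ico_Ioc_map_succ 0 (2 ^ d)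
  simp only [Order.succ_eq_add_one, ← dyadI_succ] at h
  rw [Nat.cast_zero, zero_div, Nat.cast_pow, Nat.cast_ofNat, div_self (by positivity)] at h
  rw [← h]
  ext t
  simp [Fin.exists_iff]

lemma pairwise_disjoint_dyadI (d : ℕ) :
    Pairwise (Disjoint on fun k : Fin (2 ^ d) => dyadI d (k + 1)) := by
  have h := (monotone_div_two_pow d).pairwise_disjoint_on_Ioc_succ
  simp only [Order.succ_eq_add_one, ← dyadI_succ] at h
  exact h.comp_of_injective Fin.val_injective

lemma preimage_add_const_dyadI (d i j : ℕ) :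
    (· + ((j : ℝ) - i) / 2 ^ d) ⁻¹' dyadI d j = dyadI d i := by
  rw [dyadI, preimage_add_const_Ioc, dyadI]
  congr 1 <;> ring

lemma IsDyadicPerm.exists_eqOn_add {g : ℝ → ℝ} (hg : IsDyadicPerm g) :
    ∃ d, ∃ π : Equiv.Perm (Fin (2 ^ d)), ∀ k,
      EqOn g (· + (((π k : ℕ) + 1 : ℕ) - ((k : ℕ) + 1 : ℕ) : ℝ) / 2 ^ d) (dyadI d (k + 1)) := by
  obtain ⟨-, d, π, hπ⟩ := hg
  refine ⟨d, π, fun k t ht => ?_⟩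
  rw [hπ k t ht]
  push_cast
  ring


lemma measurable_of_eqOn_cover {α β ι : Type*} [MeasurableSpace α] [MeasurableSpace β]
    [Countable ι] {t : ι → Set α} {f : α → β} {g : ι → α → β}
    (ht : ∀ i, MeasurableSet (t i)) (hcover : ⋃ i, t i = univ) (hg : ∀ i, Measurable (g i))
    (hfg : ∀ i, EqOn f (g i) (t i)) : Measurable f := by
  intro u hu
  have : f ⁻¹' u = ⋃ i, t i ∩ g i ⁻¹' u := by
    ext x
    obtain ⟨i, hi⟩ := mem_iUnion.1 (hcover ▸ mem_univ x : x ∈ ⋃ i, t i)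
    simp only [mem_preimage, mem_iUnion, mem_inter_iff]
    exact ⟨fun hx => ⟨i, hi, hfg i hi ▸ hx⟩, fun ⟨j, hj, hx⟩ => hfg j hj ▸ hx⟩
  rw [this]
  exact .iUnion fun i => (ht i).inter (hg i hu)

lemma IsDyadicPerm.measurable {g : ℝ → ℝ} (hg : IsDyadicPerm g) : Measurable g := by
  obtain ⟨d, π, hπ⟩ := hg.exists_eqOn_add
  refine measurable_of_eqOn_cover (ι := Option (Fin (2 ^ d)))
    (t := fun o => o.elim (Ioc (0 : ℝ) 1)ᶜ fun k => dyadI d (k + 1))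
    (g := fun o => o.elim id fun k => (· + (((π k : ℕ) + 1 : ℕ) - ((k : ℕ) + 1 : ℕ) : ℝ) / 2 ^ d))
    (fun o => ?_) ?_ (fun o => ?_) (fun o => ?_)
  · cases o
    · exact measurableSet_Ioc.compl
    · exact measurableSet_dyadI _ _
  · rw [iUnion_option]
    simp [iUnion_dyadI]
  · cases o
    · exact measurable_id
    · exact measurable_add_const _
  · cases o
    · exact fun t ht => hg.1 t ht
    · exact hπ _

lemma IsDyadicPerm.measurePreserving {g : ℝ → ℝ} (hg : IsDyadicPerm g) :
    MeasurePreserving g (volume.restrict (Ioc 0 1)) (volume.restrict (Ioc 0 1)) := by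
  refine ⟨hg.measurable, ?_⟩
  obtain ⟨d, π, hπ⟩ := hg.exists_eqOn_add
  rw [← iUnion_dyadI d, Measure.restrict_iUnion (pairwise_disjoint_dyadI d)
    (fun _ => measurableSet_dyadI _ _), Measure.map_sum hg.measurable.aemeasurable]
  conv_rhs => rw [← Measure.sum_comp_equiv π]
  congr 1
  funext k
  rw [Measure.map_congr (ae_restrict_of_forall_mem (measurableSet_dyadI _ _) (hπ k)),
    ← preimage_add_const_dyadI d]
  exact ((measurePreserving_add_right volume _).restrict_preimage (measurableSet_dyadI _ _)).map_eq

section Contraction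

variable (μ : Measure ℝ) [SigmaFinite μ]

instance : SigmaFinite (mLevy μ) :=
  inferInstanceAs (SigmaFinite ((volume.restrict (Ioc (0 : ℝ) 1)).prod μ))

lemma measurePreserving_diagAct {g : ℝ → ℝ}
    (hg : MeasurePreserving g (volume.restrict (Ioc 0 1)) (volume.restrict (Ioc 0 1))) (j : ℕ) :
    MeasurePreserving (diagAct g (j := j)) (Measure.pi fun _ => mLevy μ)
      (Measure.pi fun _ => mLevy μ) :=
  measurePreserving_pi _ _ fun _ => hg.prod (.id μ)

lemma integral_comp_diagAct (e : ℝ ≃ᵐ ℝ)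
    (he : MeasurePreserving e (volume.restrict (Ioc 0 1)) (volume.restrict (Ioc 0 1)))
    {j : ℕ} (F : (Fin j → ℝ × ℝ) → ℝ) :
    ∫ ρ, F (diagAct e ρ) ∂(Measure.pi fun _ => mLevy μ) =
      ∫ ρ, F ρ ∂(Measure.pi fun _ => mLevy μ) :=
  (measurePreserving_diagAct μ he j).integral_comp'
    (f := MeasurableEquiv.piCongrRight fun _ => e.prodCongr (.refl ℝ)) F

lemma contraction_diagAct (e : ℝ ≃ᵐ ℝ)
    (he : MeasurePreserving e (volume.restrict (Ioc 0 1)) (volume.restrict (Ioc 0 1)))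
    {a b k r : ℕ} {f : (Fin a → ℝ × ℝ) → (Fin r → ℝ × ℝ) → (Fin k → ℝ × ℝ) → ℝ}
    {f' : (Fin k → ℝ × ℝ) → (Fin r → ℝ × ℝ) → (Fin b → ℝ × ℝ) → ℝ}
    (hf : ∀ α γ ρ, f (diagAct e α) (diagAct e γ) (diagAct e ρ) = f α γ ρ)
    (hf' : ∀ ρ γ β, f' (diagAct e ρ) (diagAct e γ) (diagAct e β) = f' ρ γ β)
    (α : Fin a → ℝ × ℝ) (β : Fin b → ℝ × ℝ) (γ : Fin r → ℝ × ℝ) :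
    contraction μ f f' (diagAct e α) (diagAct e β) (diagAct e γ) = contraction μ f f' α β γ := by
  rw [contraction, contraction, ← integral_comp_diagAct μ e he]
  simp only [hf, hf']
  rfl

end Contraction

theorem stmt15_general (μ : Measure ℝ) [SigmaFinite μ]
    (ℍ : Set (ℝ → ℝ)) (hdyad : ∀ g ∈ ℍ, IsDyadicPerm g)
    (hinv : ∀ g ∈ ℍ, ∃ g' ∈ ℍ, g ∘ g' = id ∧ g' ∘ g = id)
    (a b k r : ℕ)
    (f : (Fin a → ℝ × ℝ) → (Fin r → ℝ × ℝ) → (Fin k → ℝ × ℝ) → ℝ)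
    (f' : (Fin k → ℝ × ℝ) → (Fin r → ℝ × ℝ) → (Fin b → ℝ × ℝ) → ℝ)
    (hfinv : ∀ g ∈ ℍ, ∀ α γ ρ, f (diagAct g α) (diagAct g γ) (diagAct g ρ) = f α γ ρ)
    (hf'inv : ∀ g ∈ ℍ, ∀ ρ γ β, f' (diagAct g ρ) (diagAct g γ) (diagAct g β) = f' ρ γ β) :
    ∀ g ∈ ℍ, ∀ (α : Fin a → ℝ × ℝ) (β : Fin b → ℝ × ℝ) (γ : Fin r → ℝ × ℝ),
      contraction μ f f' (diagAct g α) (diagAct g β) (diagAct g γ) =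
        contraction μ f f' α β γ := by
  intro g hg α β γ
  obtain ⟨g', hg', hgg', hg'g⟩ := hinv g hg
  let e : ℝ ≃ᵐ ℝ :=
    ⟨⟨g, g', congrFun hg'g, congrFun hgg'⟩, (hdyad g hg).measurable, (hdyad g' hg').measurable⟩
  exact contraction_diagAct μ e (hdyad g hg).measurePreserving (hfinv g hg) (hf'inv g hg) α β γ

/-- if the kernels `f ∈ L₂(𝕞^{⊗n})` and `f' ∈ L₂(𝕞^{⊗m})` (with
`n = a + k + r ≥ 1`, `m = b + k + r ≥ 1`) are constant on the orbits of the diagonal groups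
`ℍ[n]` resp. `ℍ[m]` of a group `ℍ` of dyadic permutations, and the contraction integrand is
absolutely integrable at every point, then the contraction `f ⊗_k^r f'` is constant on the
orbits of `ℍ[n+m-2k-r]`. -/
theorem stmt15 (μ : Measure ℝ) [SigmaFinite μ]
    (ℍ : Set (ℝ → ℝ)) (hdyad : ∀ g ∈ ℍ, IsDyadicPerm g)
    (hid : id ∈ ℍ) (hcomp : ∀ g ∈ ℍ, ∀ h ∈ ℍ, g ∘ h ∈ ℍ)
    (hinv : ∀ g ∈ ℍ, ∃ g' ∈ ℍ, g ∘ g' = id ∧ g' ∘ g = id)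
    (a b k r : ℕ) (hn : 1 ≤ a + k + r) (hm : 1 ≤ b + k + r)
    (f : (Fin a → ℝ × ℝ) → (Fin r → ℝ × ℝ) → (Fin k → ℝ × ℝ) → ℝ)
    (f' : (Fin k → ℝ × ℝ) → (Fin r → ℝ × ℝ) → (Fin b → ℝ × ℝ) → ℝ)
    (hf2 : MemLp
      (fun p : (Fin a → ℝ × ℝ) × (Fin r → ℝ × ℝ) × (Fin k → ℝ × ℝ) => f p.1 p.2.1 p.2.2) 2
      ((Measure.pi fun _ : Fin a => mLevy μ).prod
        ((Measure.pi fun _ : Fin r => mLevy μ).prod (Measure.pi fun _ : Fin k => mLevy μ))))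
    (hf'2 : MemLp
      (fun p : (Fin k → ℝ × ℝ) × (Fin r → ℝ × ℝ) × (Fin b → ℝ × ℝ) => f' p.1 p.2.1 p.2.2) 2
      ((Measure.pi fun _ : Fin k => mLevy μ).prod
        ((Measure.pi fun _ : Fin r => mLevy μ).prod (Measure.pi fun _ : Fin b => mLevy μ))))
    (hint : ∀ (α : Fin a → ℝ × ℝ) (β : Fin b → ℝ × ℝ) (γ : Fin r → ℝ × ℝ),
      (∫⁻ ρ, ENNReal.ofReal |f α γ ρ * f' ρ γ β| ∂(Measure.pi fun _ : Fin k => mLevy μ)) < ⊤)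
    (hfinv : ∀ g ∈ ℍ, ∀ α γ ρ, f (diagAct g α) (diagAct g γ) (diagAct g ρ) = f α γ ρ)
    (hf'inv : ∀ g ∈ ℍ, ∀ ρ γ β, f' (diagAct g ρ) (diagAct g γ) (diagAct g β) = f' ρ γ β) :
    ∀ g ∈ ℍ, ∀ (α : Fin a → ℝ × ℝ) (β : Fin b → ℝ × ℝ) (γ : Fin r → ℝ × ℝ),
      contraction μ f f' (diagAct g α) (diagAct g β) (diagAct g γ) =
        contraction μ f f' α β γ :=
  stmt15_general μ ℍ hdyad hinv a b k r f f' hfinv hf'inv
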